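/- arXiv:2105.14316 — 9 statements merged into one kernel-verified Lean document; each statement's English description precedes it below -/
import Mathlib

section
/- Let L be an algebraic language (operation symbols only, no constants). Suppose V is the class of L-algebras satisfying a fixed set Σ of equilinear equations, i.e. each equation has the form f(x₁,…,xₙ) = y with y among the xᵢ (unless the variety is trivial), or f(x₁,…,xₙ) = g(y₁,…,yₘ) where the set of variables on the left equals the set of variables on the right. Then V has the strong amalgamation property: whenever A, B, C ∈ V with C a subalgebra of both A and B and the underlying sets satisfy A ∩ B = C, there is an algebra D ∈ V on the set A ∪ B containing both A and B as subalgebras. -/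
/-!
The amalgam lives on `A ∪ B`. Extend the operations of `A` to all of `U` by reading arguments
outside `A` as a fixed `c ∈ A ∩ B`, and similarly for `B`. A tuple lying in `A` (or in `B`) is
evaluated there; a mixed tuple is evaluated in `A` unless the result lands in `B`, in which case
it is evaluated in `B`. An equation whose two sides have the same variables sends mixed tuples to
mixed tuples, so it holds because it holds for the extended operations of `A` and of `B`. For
`f(x_{v 0}, …) = x_j` the value `x_j` is recovered from whichever of `A`, `B` contains it, and
if `x_j` does not occur on the left, the equation makes `A` and `B` one-point algebras.
-/

/-- An algebraic language: a type of operation symbols with arities (no constants,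
no relation symbols). -/
structure Lang where
  ops : Type
  arity : ops → ℕ

/-- An interpretation of the operations of `L` on a type `M`. -/
abbrev OpsOn (L : Lang) (M : Type*) : Type _ :=
  ∀ i : L.ops, (Fin (L.arity i) → M) → M

/-- A linear equation (no constants): either `f(x_{v 0},…) = x j`, or
`f(x_{v 0},…) = g(x_{w 0},…)`.  Variables are indexed by natural numbers. -/
inductive LinEq (L : Lang) where
  | opVar : (f : L.ops) → (Fin (L.arity f) → ℕ) → ℕ → LinEq L
  | opOp : (f g : L.ops) → (Fin (L.arity f) → ℕ) → (Fin (L.arity g) → ℕ) → LinEq L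

/-- An equation is equilinear if one side is a variable, or the two sides use
exactly the same set of variables. -/
def LinEq.Equilinear {L : Lang} : LinEq L → Prop
  | .opVar _ _ _ => True
  | .opOp _ _ v w => Set.range v = Set.range w

/-- Satisfaction of a linear equation under all assignments. -/
def SatEq {L : Lang} {M : Type*} (F : OpsOn L M) : LinEq L → Prop
  | .opVar f v j => ∀ σ : ℕ → M, F f (fun k => σ (v k)) = σ j
  | .opOp f g v w => ∀ σ : ℕ → M, F f (fun k => σ (v k)) = F g (fun k => σ (w k))

/-- `φ` is a homomorphism between interpretations. -/
def IsHom {L : Lang} {M N : Type*} (FM : OpsOn L M) (FN : OpsOn L N) (φ : M → N) : Prop :=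
  ∀ i t, φ (FM i t) = FN i (fun k => φ (t k))

/-- An algebra on a subset of an ambient type `U`. -/
structure SetAlg (L : Lang) (U : Type*) where
  carrier : Set U
  op : OpsOn L ↥carrier

/-- `A` is a subalgebra of `D`: the carrier is contained and the operations agree. -/
def SetAlg.Sub {L : Lang} {U : Type*} (A D : SetAlg L U) : Prop :=
  ∃ h : A.carrier ⊆ D.carrier,
    ∀ i t, ((A.op i t : U)) = (D.op i (fun k => ⟨(t k : U), h (t k).2⟩) : U)

theorem SatEq.subsingleton_of_notMem_range {L : Lang} {M : Type*} {F : OpsOn L M}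
    {f : L.ops} {v : Fin (L.arity f) → ℕ} {j : ℕ} (h : SatEq F (.opVar f v j))
    (hj : j ∉ Set.range v) : Subsingleton M := by
  classical
  refine ⟨fun x y => ?_⟩
  have hx := h (Function.update (fun _ => y) j x)
  have hy := h (fun _ => y)
  have hv : ∀ k, v k ≠ j := fun k hk => hj ⟨k, hk⟩
  simp only [Function.update_self, Function.update_of_ne (hv _)] at hx
  exact hx.symm.trans hy

namespace SetAlg

open Classical

variable {L : Lang} {U : Type*}

noncomputable def retract (A : SetAlg L U) (a : A.carrier) (x : U) : A.carrier :=
  if h : x ∈ A.carrier then ⟨x, h⟩ else a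

theorem retract_of_mem (A : SetAlg L U) (a : A.carrier) {x : U} (hx : x ∈ A.carrier) :
    A.retract a x = ⟨x, hx⟩ :=
  dif_pos hx

theorem coe_retract (A : SetAlg L U) (a : A.carrier) (x : U) :
    (A.retract a x : U) = if x ∈ A.carrier then x else a := by
  unfold retract
  split_ifs <;> rfl

noncomputable def extOp (A : SetAlg L U) (a : A.carrier) (f : L.ops)
    (t : Fin (L.arity f) → U) : U :=
  A.op f (A.retract a ∘ t)

theorem extOp_mem (A : SetAlg L U) (a : A.carrier) (f : L.ops) (t : Fin (L.arity f) → U) :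
    A.extOp a f t ∈ A.carrier :=
  (A.op f _).2

theorem extOp_of_forall_mem (A : SetAlg L U) (a : A.carrier) {f : L.ops}
    {t : Fin (L.arity f) → U} (ht : ∀ k, t k ∈ A.carrier) :
    A.extOp a f t = A.op f (fun k => ⟨t k, ht k⟩) := by
  unfold extOp
  congr 2
  funext k
  exact A.retract_of_mem a (ht k)

theorem extOp_of_satEq_opOp {A : SetAlg L U} (a : A.carrier) {f g : L.ops}
    {v : Fin (L.arity f) → ℕ} {w : Fin (L.arity g) → ℕ} (h : SatEq A.op (.opOp f g v w))
    (σ : ℕ → U) : A.extOp a f (σ ∘ v) = A.extOp a g (σ ∘ w) :=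
  congrArg Subtype.val (h (A.retract a ∘ σ))

theorem extOp_of_satEq_opVar {A : SetAlg L U} (a : A.carrier) {f : L.ops}
    {v : Fin (L.arity f) → ℕ} {j : ℕ} (h : SatEq A.op (.opVar f v j)) (σ : ℕ → U) :
    A.extOp a f (σ ∘ v) = A.retract a (σ j) :=
  congrArg Subtype.val (h (A.retract a ∘ σ))

def Compatible (A B : SetAlg L U) : Prop :=
  ∀ (f : L.ops) (t : Fin (L.arity f) → U) (hA : ∀ k, t k ∈ A.carrier)
    (hB : ∀ k, t k ∈ B.carrier),
    (A.op f (fun k => ⟨t k, hA k⟩) : U) = B.op f (fun k => ⟨t k, hB k⟩)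

theorem Compatible.of_sub {A B C : SetAlg L U} (hCA : C.Sub A) (hCB : C.Sub B)
    (hAB : A.carrier ∩ B.carrier ⊆ C.carrier) : A.Compatible B := fun f t hA hB =>
  (hCA.2 f fun k => ⟨t k, hAB ⟨hA k, hB k⟩⟩).symm.trans (hCB.2 f _)

noncomputable def amalgOp (A B : SetAlg L U) (a : A.carrier) (b : B.carrier) (f : L.ops)
    (t : Fin (L.arity f) → U) : U :=
  if ∀ k, t k ∈ A.carrier then A.extOp a f t
  else if ∀ k, t k ∈ B.carrier then B.extOp b f t
  else if A.extOp a f t ∈ B.carrier then B.extOp b f t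
  else A.extOp a f t

theorem amalgOp_mem (A B : SetAlg L U) (a : A.carrier) (b : B.carrier) (f : L.ops)
    (t : Fin (L.arity f) → U) : A.amalgOp B a b f t ∈ A.carrier ∪ B.carrier := by
  unfold amalgOp
  split_ifs
  exacts [Or.inl (A.extOp_mem a f t), Or.inr (B.extOp_mem b f t),
    Or.inr (B.extOp_mem b f t), Or.inl (A.extOp_mem a f t)]

noncomputable def amalg (A B : SetAlg L U) (a : A.carrier) (b : B.carrier) : SetAlg L U where
  carrier := A.carrier ∪ B.carrier
  op f t := ⟨A.amalgOp B a b f (Subtype.val ∘ t), A.amalgOp_mem B a b f _⟩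

variable {A B : SetAlg L U} {a : A.carrier} {b : B.carrier}

theorem sub_amalg_left : A.Sub (A.amalg B a b) :=
  ⟨Set.subset_union_left, fun f t => by
    have ht : ∀ k, (t k : U) ∈ A.carrier := fun k => (t k).2
    simp only [amalg, amalgOp, Function.comp_def, if_pos ht, A.extOp_of_forall_mem a ht]⟩

theorem sub_amalg_right (hAB : A.Compatible B) : B.Sub (A.amalg B a b) := by
  refine ⟨Set.subset_union_right, fun f t => ?_⟩
  have ht : ∀ k, (t k : U) ∈ B.carrier := fun k => (t k).2
  simp only [amalg, amalgOp, Function.comp_def, if_pos ht, B.extOp_of_forall_mem b ht]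
  split_ifs with htA
  · rw [A.extOp_of_forall_mem a htA, hAB f _ htA ht]
  · rfl

theorem amalgOp_of_satEq_opOp {f g : L.ops} {v : Fin (L.arity f) → ℕ}
    {w : Fin (L.arity g) → ℕ} (hA : SatEq A.op (.opOp f g v w))
    (hB : SatEq B.op (.opOp f g v w)) (hvw : Set.range v = Set.range w) (σ : ℕ → U) :
    A.amalgOp B a b f (σ ∘ v) = A.amalgOp B a b g (σ ∘ w) := by
  have hmem : ∀ S : Set U, (∀ k, (σ ∘ v) k ∈ S) ↔ ∀ k, (σ ∘ w) k ∈ S := fun S => by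
    simp only [← Set.range_subset_iff, Set.range_comp, hvw]
  simp only [amalgOp, hmem, extOp_of_satEq_opOp a hA, extOp_of_satEq_opOp b hB]

theorem amalgOp_of_satEq_opVar {f : L.ops} {v : Fin (L.arity f) → ℕ} {j : ℕ}
    (hA : SatEq A.op (.opVar f v j)) (hB : SatEq B.op (.opVar f v j))
    (hj : j ∈ Set.range v) (ha : (a : U) ∈ B.carrier) {σ : ℕ → U}
    (hσ : σ j ∈ A.carrier ∪ B.carrier) :
    A.amalgOp B a b f (σ ∘ v) = σ j := by
  obtain ⟨k, rfl⟩ := hj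
  simp only [amalgOp, extOp_of_satEq_opVar a hA, extOp_of_satEq_opVar b hB, coe_retract]
  split_ifs <;> simp_all

theorem subsingleton_amalg [Subsingleton A.carrier] [Subsingleton B.carrier]
    (ha : (a : U) ∈ B.carrier) : Subsingleton (A.amalg B a b).carrier := by
  rw [Set.subsingleton_coe] at *
  change (A.carrier ∪ B.carrier).Subsingleton
  rw [‹A.carrier.Subsingleton›.eq_singleton_of_mem a.2,
    ‹B.carrier.Subsingleton›.eq_singleton_of_mem ha, Set.union_self]
  exact Set.subsingleton_singleton

theorem amalg_satEq {e : LinEq L} (he : e.Equilinear) (hA : SatEq A.op e) (hB : SatEq B.op e)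
    (ha : (a : U) ∈ B.carrier) : SatEq (A.amalg B a b).op e := by
  cases e with
  | opOp f g v w =>
    exact fun σ => Subtype.ext (amalgOp_of_satEq_opOp hA hB he (Subtype.val ∘ σ))
  | opVar f v j =>
    by_cases hj : j ∈ Set.range v
    · exact fun σ =>
        Subtype.ext (amalgOp_of_satEq_opVar (σ := Subtype.val ∘ σ) hA hB hj ha (σ j).2)
    · have := hA.subsingleton_of_notMem_range hj
      have := hB.subsingleton_of_notMem_range hj
      have := subsingleton_amalg (b := b) ha
      exact fun _ => Subsingleton.elim _ _

end SetAlg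

theorem stmt_0_general (L : Lang) (U : Type) (E : Set (LinEq L)) (hE : ∀ e ∈ E, e.Equilinear)
    (A B C : SetAlg L U)
    (hCne : C.carrier.Nonempty)
    (hAsat : ∀ e ∈ E, SatEq A.op e) (hBsat : ∀ e ∈ E, SatEq B.op e)
    (hCA : C.Sub A) (hCB : C.Sub B)
    (hcap : A.carrier ∩ B.carrier = C.carrier) :
    ∃ D : SetAlg L U, D.carrier = A.carrier ∪ B.carrier ∧
      (∀ e ∈ E, SatEq D.op e) ∧ A.Sub D ∧ B.Sub D := by
  obtain ⟨c, hc⟩ := hCne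
  have hcAB : c ∈ A.carrier ∩ B.carrier := hcap ▸ hc
  exact ⟨A.amalg B ⟨c, hcAB.1⟩ ⟨c, hcAB.2⟩, rfl,
    fun e he => SetAlg.amalg_satEq (hE e he) (hAsat e he) (hBsat e he) hcAB.2,
    SetAlg.sub_amalg_left, SetAlg.sub_amalg_right (.of_sub hCA hCB hcap.le)⟩

/-- A variety axiomatized by equilinear equations (language without constants)
has the strong amalgamation property: an amalgam exists on the union `A ∪ B`. -/
theorem stmt_0 (L : Lang) (U : Type) (E : Set (LinEq L)) (hE : ∀ e ∈ E, e.Equilinear)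
    (A B C : SetAlg L U)
    (hAne : A.carrier.Nonempty) (hBne : B.carrier.Nonempty) (hCne : C.carrier.Nonempty)
    (hAsat : ∀ e ∈ E, SatEq A.op e) (hBsat : ∀ e ∈ E, SatEq B.op e)
    (hCsat : ∀ e ∈ E, SatEq C.op e)
    (hCA : C.Sub A) (hCB : C.Sub B)
    (hcap : A.carrier ∩ B.carrier = C.carrier) :
    ∃ D : SetAlg L U, D.carrier = A.carrier ∪ B.carrier ∧
      (∀ e ∈ E, SatEq D.op e) ∧ A.Sub D ∧ B.Sub D :=
  stmt_0_general L U E hE A B C hCne hAsat hBsat hCA hCB hcap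
end

section
/- Let V be a nontrivial class of algebras (in a language without constants) axiomatized by a set of equilinear equations. Then for every positive natural number n, V contains an algebra with exactly n elements. -/
/-
A tuple `t` of elements of a countable set `D` can be read as a tuple of variables, via an
injection `ι : D → ℕ`. Interpret each `f` on `D` by `f(t) = d` whenever the nontrivial model
`A` satisfies `f(x_{ι t₀}, …) = x_{ι d}`, and by a fixed default value otherwise; nontriviality
makes `d` unique. An identity `f(x_v) = x_j` of `A` holds in `D` because renaming variables
along `ι ∘ σ` keeps it valid in `A`. For `f(x_v) = g(x_w)`, after the same renaming `A` satisfies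
`f(…) = x_{ι d}` exactly when it satisfies `g(…) = x_{ι d}`, so both sides are the same `d`
or both the default.
-/

section

variable {L : Lang}

def LinEq.rename (ρ : ℕ → ℕ) : LinEq L → LinEq L
  | .opVar f v j => .opVar f (ρ ∘ v) (ρ j)
  | .opOp f g v w => .opOp f g (ρ ∘ v) (ρ ∘ w)

namespace SatEq

variable {M : Type*} {F : OpsOn L M}

theorem rename (ρ : ℕ → ℕ) : ∀ {e : LinEq L}, SatEq F e → SatEq F (e.rename ρ)
  | .opVar .., h => fun σ => h (σ ∘ ρ)
  | .opOp .., h => fun σ => h (σ ∘ ρ)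

theorem opVar_iff_of_opOp {f g : L.ops} {v : Fin (L.arity f) → ℕ} {w : Fin (L.arity g) → ℕ}
    (h : SatEq F (.opOp f g v w)) (j : ℕ) :
    SatEq F (.opVar f v j) ↔ SatEq F (.opVar g w j) :=
  ⟨fun hf σ => (h σ).symm.trans (hf σ), fun hg σ => (h σ).trans (hg σ)⟩

theorem opVar_right_unique [Nontrivial M] {f : L.ops} {v : Fin (L.arity f) → ℕ} {i j : ℕ}
    (hi : SatEq F (.opVar f v i)) (hj : SatEq F (.opVar f v j)) : i = j := by
  classical
  obtain ⟨x, y, hxy⟩ := exists_pair_ne M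
  by_contra hij
  have := (hi fun k => if k = i then x else y).symm.trans (hj fun k => if k = i then x else y)
  simp only [if_neg (Ne.symm hij)] at this
  exact hxy this

end SatEq

section ProjOps

variable {A : Type*} (FA : OpsOn L A) {D : Type*} (ι : D → ℕ)

def IsProjValue (f : L.ops) (t : Fin (L.arity f) → D) (d : D) : Prop :=
  SatEq FA (.opVar f (ι ∘ t) (ι d))

open Classical in
noncomputable def projOps [Inhabited D] : OpsOn L D := fun f t =>
  if h : ∃ d, IsProjValue FA ι f t d then h.choose else default

variable {FA ι} [Inhabited D]

theorem projOps_eq_of_isProjValue [Nontrivial A] (hι : ι.Injective) {f : L.ops}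
    {t : Fin (L.arity f) → D} {d : D} (hd : IsProjValue FA ι f t d) : projOps FA ι f t = d := by
  have hex : ∃ d, IsProjValue FA ι f t d := ⟨d, hd⟩
  rw [projOps, dif_pos hex]
  exact hι (hex.choose_spec.opVar_right_unique hd)

theorem projOps_eq_default {f : L.ops} {t : Fin (L.arity f) → D}
    (h : ¬ ∃ d, IsProjValue FA ι f t d) : projOps FA ι f t = default := by
  rw [projOps, dif_neg h]

theorem projOps_apply_eq_of_forall_iff [Nontrivial A] (hι : ι.Injective) {f g : L.ops}
    {t : Fin (L.arity f) → D} {s : Fin (L.arity g) → D}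
    (h : ∀ d, IsProjValue FA ι f t d ↔ IsProjValue FA ι g s d) :
    projOps FA ι f t = projOps FA ι g s := by
  by_cases hex : ∃ d, IsProjValue FA ι f t d
  · obtain ⟨d, hd⟩ := hex
    rw [projOps_eq_of_isProjValue hι hd, projOps_eq_of_isProjValue hι ((h d).1 hd)]
  · rw [projOps_eq_default hex, projOps_eq_default fun ⟨d, hd⟩ => hex ⟨d, (h d).2 hd⟩]

theorem SatEq.projOps [Nontrivial A] (hι : ι.Injective) :
    ∀ {e : LinEq L}, SatEq FA e → SatEq (projOps FA ι) e
  | .opVar _ _ _, h => fun σ => projOps_eq_of_isProjValue hι (h.rename (ι ∘ σ))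
  | .opOp _ _ _ _, h => fun σ =>
      projOps_apply_eq_of_forall_iff hι fun d => (h.rename (ι ∘ σ)).opVar_iff_of_opOp (ι d)

end ProjOps

end

theorem stmt_2_general (L : Lang) (E : Set (LinEq L))
    (A : Type) (FA : OpsOn L A) (hAsat : ∀ e ∈ E, SatEq FA e)
    (a b : A) (hab : a ≠ b)
    (n : ℕ) (hn : 0 < n) :
    ∃ (D : Type) (FD : OpsOn L D),
      (∀ e ∈ E, SatEq FD e) ∧ Nat.card D = n := by
  have : Nontrivial A := ⟨⟨a, b, hab⟩⟩
  have : Inhabited (Fin n) := ⟨⟨0, hn⟩⟩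
  exact ⟨Fin n, projOps FA Fin.val, fun e he => (hAsat e he).projOps Fin.val_injective,
    Nat.card_fin n⟩

/-- A nontrivial class of algebras axiomatized by equilinear equations (no constants)
contains, for every positive `n`, an algebra with exactly `n` elements. -/
theorem stmt_2 (L : Lang) (E : Set (LinEq L)) (hE : ∀ e ∈ E, e.Equilinear)
    (A : Type) (FA : OpsOn L A) (hAsat : ∀ e ∈ E, SatEq FA e)
    (a b : A) (hab : a ≠ b)
    (n : ℕ) (hn : 0 < n) :
    ∃ (D : Type) (FD : OpsOn L D),
      (∀ e ∈ E, SatEq FD e) ∧ Nat.card D = n :=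
  stmt_2_general L E A FA hAsat a b hab n hn
end

section
/- The class of algebras (M, f) where f is a ternary Maltsev operation, i.e. satisfying f(x,y,y) = x and f(x,x,y) = y, has the strong amalgamation property: if A, B, C are Maltsev algebras with C a subalgebra of both A and B and A ∩ B = C, then there is a Maltsev algebra structure on A ∪ B extending both A and B. -/
/-!
Glue the two operations: on triples from `A` use `fA`, on triples from `B` use `fB`
(the two agree on triples from `A ∩ B = C`, where both restrict to `fC`), and on the
remaining mixed triples use the operation `(x, y, z) ↦ if y = z then x else z`, which is a
Maltsev operation on any set. Each Maltsev identity is an equation about a triple of the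
form `(x, y, y)` or `(x, x, y)`, so it holds by whichever of the three cases that triple
falls into.
-/

open Set

structure IsMaltsev {α : Type*} (f : α → α → α → α) : Prop where
  left : ∀ x y, f x y y = x
  right : ∀ x y, f x x y = y

def defaultMaltsev {α : Type*} [DecidableEq α] (x y z : α) : α :=
  if y = z then x else z

theorem isMaltsev_defaultMaltsev {α : Type*} [DecidableEq α] :
    IsMaltsev (defaultMaltsev (α := α)) where
  left _ _ := if_pos rfl
  right x y := by
    unfold defaultMaltsev
    split_ifs with h
    exacts [h, rfl]

namespace Set

variable {U : Type*} {A B : Set U}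

open Classical in
noncomputable def glueTernary (fA : A → A → A → A) (fB : B → B → B → B)
    (g : ↥(A ∪ B) → ↥(A ∪ B) → ↥(A ∪ B) → ↥(A ∪ B)) (x y z : ↥(A ∪ B)) : ↥(A ∪ B) :=
  if h : (x : U) ∈ A ∧ (y : U) ∈ A ∧ (z : U) ∈ A then
    inclusion subset_union_left (fA ⟨x, h.1⟩ ⟨y, h.2.1⟩ ⟨z, h.2.2⟩)
  else if h : (x : U) ∈ B ∧ (y : U) ∈ B ∧ (z : U) ∈ B then
    inclusion subset_union_right (fB ⟨x, h.1⟩ ⟨y, h.2.1⟩ ⟨z, h.2.2⟩)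
  else g x y z

variable {fA : A → A → A → A} {fB : B → B → B → B}
  {g : ↥(A ∪ B) → ↥(A ∪ B) → ↥(A ∪ B) → ↥(A ∪ B)}

theorem glueTernary_inclusion_left (x y z : A) :
    glueTernary fA fB g (inclusion subset_union_left x) (inclusion subset_union_left y)
      (inclusion subset_union_left z) = inclusion subset_union_left (fA x y z) :=
  dif_pos ⟨x.2, y.2, z.2⟩

theorem glueTernary_inclusion_right
    (hcompat : ∀ (x y z : A) (hx : (x : U) ∈ B) (hy : (y : U) ∈ B) (hz : (z : U) ∈ B),
      (fA x y z : U) = fB ⟨x, hx⟩ ⟨y, hy⟩ ⟨z, hz⟩)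
    (x y z : B) :
    glueTernary fA fB g (inclusion subset_union_right x) (inclusion subset_union_right y)
      (inclusion subset_union_right z) = inclusion subset_union_right (fB x y z) := by
  by_cases hA : (x : U) ∈ A ∧ (y : U) ∈ A ∧ (z : U) ∈ A
  · exact (dif_pos hA).trans (Subtype.ext (hcompat _ _ _ x.2 y.2 z.2))
  · exact (dif_neg hA).trans (dif_pos ⟨x.2, y.2, z.2⟩)

theorem IsMaltsev.glueTernary (hA : IsMaltsev fA) (hB : IsMaltsev fB) (hg : IsMaltsev g) :
    IsMaltsev (glueTernary fA fB g) where
  left x y := by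
    unfold Set.glueTernary
    split_ifs
    · exact congrArg (inclusion _) (hA.left _ _)
    · exact congrArg (inclusion _) (hB.left _ _)
    · exact hg.left x y
  right x y := by
    unfold Set.glueTernary
    split_ifs
    · exact congrArg (inclusion _) (hA.right _ _)
    · exact congrArg (inclusion _) (hB.right _ _)
    · exact hg.right x y

end Set

theorem stmt_4_general {U : Type} (A B C : Set U)
    (fA : ↥A → ↥A → ↥A → ↥A) (fB : ↥B → ↥B → ↥B → ↥B) (fC : ↥C → ↥C → ↥C → ↥C)
    (hA1 : ∀ x y, fA x y y = x) (hA2 : ∀ x y, fA x x y = y)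
    (hB1 : ∀ x y, fB x y y = x) (hB2 : ∀ x y, fB x x y = y)
    (hCA : C ⊆ A) (hCB : C ⊆ B) (hAB : A ∩ B = C)
    (hextA : ∀ x y z : ↥C,
      ((fC x y z : U)) = (fA ⟨x, hCA x.2⟩ ⟨y, hCA y.2⟩ ⟨z, hCA z.2⟩ : U))
    (hextB : ∀ x y z : ↥C,
      ((fC x y z : U)) = (fB ⟨x, hCB x.2⟩ ⟨y, hCB y.2⟩ ⟨z, hCB z.2⟩ : U)) :
    ∃ fD : ↥(A ∪ B) → ↥(A ∪ B) → ↥(A ∪ B) → ↥(A ∪ B),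
      (∀ x y, fD x y y = x) ∧ (∀ x y, fD x x y = y) ∧
      (∀ x y z : ↥A, ((fA x y z : U)) =
        (fD ⟨x, Set.mem_union_left B x.2⟩ ⟨y, Set.mem_union_left B y.2⟩
          ⟨z, Set.mem_union_left B z.2⟩ : U)) ∧
      (∀ x y z : ↥B, ((fB x y z : U)) =
        (fD ⟨x, Set.mem_union_right A x.2⟩ ⟨y, Set.mem_union_right A y.2⟩
          ⟨z, Set.mem_union_right A z.2⟩ : U)) := by
  classical
  have mem_C {u : U} (ha : u ∈ A) (hb : u ∈ B) : u ∈ C := hAB ▸ ⟨ha, hb⟩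
  have hcompat (x y z : A) (hx : (x : U) ∈ B) (hy : (y : U) ∈ B) (hz : (z : U) ∈ B) :
      (fA x y z : U) = fB ⟨x, hx⟩ ⟨y, hy⟩ ⟨z, hz⟩ :=
    (hextA ⟨x, mem_C x.2 hx⟩ ⟨y, mem_C y.2 hy⟩ ⟨z, mem_C z.2 hz⟩).symm.trans
      (hextB ⟨x, mem_C x.2 hx⟩ ⟨y, mem_C y.2 hy⟩ ⟨z, mem_C z.2 hz⟩)
  have hD := IsMaltsev.glueTernary ⟨hA1, hA2⟩ ⟨hB1, hB2⟩ isMaltsev_defaultMaltsev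
  exact ⟨_, hD.left, hD.right,
    fun x y z => congrArg Subtype.val (glueTernary_inclusion_left x y z).symm,
    fun x y z => congrArg Subtype.val (glueTernary_inclusion_right hcompat x y z).symm⟩

/-- The class of algebras with a Maltsev operation has the strong amalgamation
property: given Maltsev algebras on sets `A`, `B` with common subalgebra `C = A ∩ B`,
there is a Maltsev structure on `A ∪ B` extending both. -/
theorem stmt_4 {U : Type} (A B C : Set U) (hCne : C.Nonempty)
    (fA : ↥A → ↥A → ↥A → ↥A) (fB : ↥B → ↥B → ↥B → ↥B) (fC : ↥C → ↥C → ↥C → ↥C)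
    (hA1 : ∀ x y, fA x y y = x) (hA2 : ∀ x y, fA x x y = y)
    (hB1 : ∀ x y, fB x y y = x) (hB2 : ∀ x y, fB x x y = y)
    (hC1 : ∀ x y, fC x y y = x) (hC2 : ∀ x y, fC x x y = y)
    (hCA : C ⊆ A) (hCB : C ⊆ B) (hAB : A ∩ B = C)
    (hextA : ∀ x y z : ↥C,
      ((fC x y z : U)) = (fA ⟨x, hCA x.2⟩ ⟨y, hCA y.2⟩ ⟨z, hCA z.2⟩ : U))
    (hextB : ∀ x y z : ↥C,
      ((fC x y z : U)) = (fB ⟨x, hCB x.2⟩ ⟨y, hCB y.2⟩ ⟨z, hCB z.2⟩ : U)) :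
    ∃ fD : ↥(A ∪ B) → ↥(A ∪ B) → ↥(A ∪ B) → ↥(A ∪ B),
      (∀ x y, fD x y y = x) ∧ (∀ x y, fD x x y = y) ∧
      (∀ x y z : ↥A, ((fA x y z : U)) =
        (fD ⟨x, Set.mem_union_left B x.2⟩ ⟨y, Set.mem_union_left B y.2⟩
          ⟨z, Set.mem_union_left B z.2⟩ : U)) ∧
      (∀ x y z : ↥B, ((fB x y z : U)) =
        (fD ⟨x, Set.mem_union_right A x.2⟩ ⟨y, Set.mem_union_right A y.2⟩
          ⟨z, Set.mem_union_right A z.2⟩ : U)) :=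
  stmt_4_general A B C fA fB fC hA1 hA2 hB1 hB2 hCA hCB hAB hextA hextB
end

section
/- The class of algebras with a majority operation, i.e. a ternary operation m satisfying m(x,x,y) = x, m(x,y,x) = x, and m(y,x,x) = x, has the strong amalgamation property and the joint embedding property. -/
/-!
The majority laws only constrain an operation on triples with a repeated entry. Hence any
ternary operation becomes a majority operation after it is overridden on those triples by the
forced value, and this override does not disturb an injective homomorphism from a majority
algebra. For amalgamation take `mA` on triples from `A` and `mB` on triples from `B` (they agree
on `A ∩ B = C`), anything on mixed triples, and override; for joint embedding do the same on the
disjoint union.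
-/

open Function

def IsMajority {α : Type*} (m : α → α → α → α) : Prop :=
  ∀ x y, m x x y = x ∧ m x y x = x ∧ m y x x = x

open Classical in
noncomputable def withMajority {α : Type*} (f : α → α → α → α) : α → α → α → α :=
  fun x y z => if x = y then x else if x = z then x else if y = z then y else f x y z

theorem isMajority_withMajority {α : Type*} (f : α → α → α → α) :
    IsMajority (withMajority f) := by
  intro x y
  refine ⟨?_, ?_, ?_⟩ <;> by_cases h : x = y <;> simp [withMajority, h, eq_comm]

theorem withMajority_apply_of_injective {α β : Type*} {f : α → α → α → α}
    {g : β → β → β → β} (hg : IsMajority g) {e : β → α} (he : Injective e)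
    (hfe : ∀ a b c, f (e a) (e b) (e c) = e (g a b c)) (a b c : β) :
    withMajority f (e a) (e b) (e c) = e (g a b c) := by
  unfold withMajority
  split_ifs with hab hac hbc
  · rw [he hab, (hg b c).1]
  · rw [he hac, (hg c b).2.1]
  · rw [he hbc, (hg c a).2.2]
  · exact hfe a b c

section Amalgamation

variable {U : Type*} (A B : Set U)

open Classical in
noncomputable def unionOp (mA : A → A → A → A) (mB : B → B → B → B) :
    ↥(A ∪ B) → ↥(A ∪ B) → ↥(A ∪ B) → ↥(A ∪ B) :=
  fun x y z =>
    if h : x.1 ∈ A ∧ y.1 ∈ A ∧ z.1 ∈ A then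
      Set.inclusion Set.subset_union_left (mA ⟨x, h.1⟩ ⟨y, h.2.1⟩ ⟨z, h.2.2⟩)
    else if h : x.1 ∈ B ∧ y.1 ∈ B ∧ z.1 ∈ B then
      Set.inclusion Set.subset_union_right (mB ⟨x, h.1⟩ ⟨y, h.2.1⟩ ⟨z, h.2.2⟩)
    else x

variable {A B} (mA : A → A → A → A) (mB : B → B → B → B)

theorem unionOp_inclusion_left (x y z : A) :
    unionOp A B mA mB (Set.inclusion Set.subset_union_left x)
      (Set.inclusion Set.subset_union_left y) (Set.inclusion Set.subset_union_left z) =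
    Set.inclusion Set.subset_union_left (mA x y z) :=
  dif_pos ⟨x.2, y.2, z.2⟩

theorem unionOp_inclusion_right
    (hAB : ∀ x y z (hx : x ∈ A ∩ B) (hy : y ∈ A ∩ B) (hz : z ∈ A ∩ B),
      (mA ⟨x, hx.1⟩ ⟨y, hy.1⟩ ⟨z, hz.1⟩ : U) = mB ⟨x, hx.2⟩ ⟨y, hy.2⟩ ⟨z, hz.2⟩)
    (x y z : B) :
    unionOp A B mA mB (Set.inclusion Set.subset_union_right x)
      (Set.inclusion Set.subset_union_right y) (Set.inclusion Set.subset_union_right z) =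
    Set.inclusion Set.subset_union_right (mB x y z) := by
  unfold unionOp
  split_ifs with hA hB
  · exact Subtype.ext (hAB x y z ⟨hA.1, x.2⟩ ⟨hA.2.1, y.2⟩ ⟨hA.2.2, z.2⟩)
  · rfl
  · exact absurd ⟨x.2, y.2, z.2⟩ hB

end Amalgamation

def sumOp {A B : Type*} (mA : A → A → A → A) (mB : B → B → B → B) :
    A ⊕ B → A ⊕ B → A ⊕ B → A ⊕ B
  | .inl a, .inl b, .inl c => .inl (mA a b c)
  | .inr a, .inr b, .inr c => .inr (mB a b c)
  | x, _, _ => x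

/-- The class of algebras with a majority operation has the strong amalgamation
property and the joint embedding property. -/
theorem stmt_5 :
    (∀ (U : Type) (A B C : Set U), C.Nonempty →
      ∀ (mA : ↥A → ↥A → ↥A → ↥A) (mB : ↥B → ↥B → ↥B → ↥B) (mC : ↥C → ↥C → ↥C → ↥C),
      (∀ x y, mA x x y = x ∧ mA x y x = x ∧ mA y x x = x) →
      (∀ x y, mB x x y = x ∧ mB x y x = x ∧ mB y x x = x) →
      (∀ x y, mC x x y = x ∧ mC x y x = x ∧ mC y x x = x) →
      ∀ (hCA : C ⊆ A) (hCB : C ⊆ B), A ∩ B = C →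
      (∀ x y z : ↥C,
        ((mC x y z : U)) = (mA ⟨x, hCA x.2⟩ ⟨y, hCA y.2⟩ ⟨z, hCA z.2⟩ : U)) →
      (∀ x y z : ↥C,
        ((mC x y z : U)) = (mB ⟨x, hCB x.2⟩ ⟨y, hCB y.2⟩ ⟨z, hCB z.2⟩ : U)) →
      ∃ mD : ↥(A ∪ B) → ↥(A ∪ B) → ↥(A ∪ B) → ↥(A ∪ B),
        (∀ x y, mD x x y = x ∧ mD x y x = x ∧ mD y x x = x) ∧
        (∀ x y z : ↥A, ((mA x y z : U)) =
          (mD ⟨x, Set.mem_union_left B x.2⟩ ⟨y, Set.mem_union_left B y.2⟩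
            ⟨z, Set.mem_union_left B z.2⟩ : U)) ∧
        (∀ x y z : ↥B, ((mB x y z : U)) =
          (mD ⟨x, Set.mem_union_right A x.2⟩ ⟨y, Set.mem_union_right A y.2⟩
            ⟨z, Set.mem_union_right A z.2⟩ : U))) ∧
    (∀ (A B : Type), Nonempty A → Nonempty B →
      ∀ (mA : A → A → A → A) (mB : B → B → B → B),
      (∀ x y, mA x x y = x ∧ mA x y x = x ∧ mA y x x = x) →
      (∀ x y, mB x x y = x ∧ mB x y x = x ∧ mB y x x = x) →
      ∃ (D : Type) (mD : D → D → D → D) (ι : A → D) (κ : B → D),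
        (∀ x y, mD x x y = x ∧ mD x y x = x ∧ mD y x x = x) ∧
        Function.Injective ι ∧ Function.Injective κ ∧
        (∀ x y z, ι (mA x y z) = mD (ι x) (ι y) (ι z)) ∧
        (∀ x y z, κ (mB x y z) = mD (κ x) (κ y) (κ z))) := by
  refine ⟨fun U A B C _ mA mB mC hA hB _ hCA hCB hABC hCAeq hCBeq => ?_,
    fun A B _ _ mA mB hA hB => ?_⟩
  · have hAB : ∀ x y z (hx : x ∈ A ∩ B) (hy : y ∈ A ∩ B) (hz : z ∈ A ∩ B),
        (mA ⟨x, hx.1⟩ ⟨y, hy.1⟩ ⟨z, hz.1⟩ : U) = mB ⟨x, hx.2⟩ ⟨y, hy.2⟩ ⟨z, hz.2⟩ := by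
      subst hABC
      intro x y z hx hy hz
      exact (hCAeq ⟨x, hx⟩ ⟨y, hy⟩ ⟨z, hz⟩).symm.trans (hCBeq ⟨x, hx⟩ ⟨y, hy⟩ ⟨z, hz⟩)
    refine ⟨withMajority (unionOp A B mA mB), isMajority_withMajority _,
      fun x y z => ?_, fun x y z => ?_⟩
    · exact congrArg Subtype.val (withMajority_apply_of_injective hA
        (Set.inclusion_injective _) (unionOp_inclusion_left mA mB) x y z).symm
    · exact congrArg Subtype.val (withMajority_apply_of_injective hB
        (Set.inclusion_injective _) (unionOp_inclusion_right mA mB hAB) x y z).symm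
  · refine ⟨A ⊕ B, withMajority (sumOp mA mB), Sum.inl, Sum.inr, isMajority_withMajority _,
      Sum.inl_injective, Sum.inr_injective, fun x y z => ?_, fun x y z => ?_⟩
    · exact (withMajority_apply_of_injective hA Sum.inl_injective (fun _ _ _ => rfl) x y z).symm
    · exact (withMajority_apply_of_injective hB Sum.inr_injective (fun _ _ _ => rfl) x y z).symm
end

section
/- The class of algebras with a Pixley operation, i.e. a ternary operation p satisfying p(x,y,y) = x, p(x,y,x) = x, and p(y,y,x) = x, has the strong amalgamation property and the joint embedding property. -/
/-!
A Pixley operation is pinned down on every triple with a repeated entry: there it must agree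
with `pixleyDefault`, i.e. `p(x,y,z) = x` unless `x = y ≠ z`, in which case it is `z`.
Conversely any operation agreeing with `pixleyDefault` on such triples is Pixley. Hence on
`A ∪ B` we may use `pA` on triples from `A`, `pB` on triples from `B` (they agree on
`A ∩ B = C`) and `pixleyDefault` on all remaining triples; this is a Pixley operation
extending both. Joint embedding holds in the product `A × B`, into which `A` and `B` embed
along fibres because Pixley operations are idempotent (`p x x x = x`).
-/

open Set Function

def IsPixley {α : Type*} (p : α → α → α → α) : Prop :=
  ∀ x y, p x y y = x ∧ p x y x = x ∧ p y y x = x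

open Classical in
noncomputable def pixleyDefault {α : Type*} (x y z : α) : α :=
  if y = z then x else if x = y then z else x

section Pixley

variable {α β : Type*} {p : α → α → α → α}

theorem isPixley_iff :
    IsPixley p ↔ ∀ x y z, (x = y ∨ y = z ∨ x = z) → p x y z = pixleyDefault x y z := by
  constructor
  · rintro h x y z (rfl | rfl | rfl)
    · by_cases hxz : x = z
      · subst hxz; simp [pixleyDefault, (h x x).1]
      · simp [pixleyDefault, hxz, (h z x).2.2]
    · simp [pixleyDefault, (h x y).1]
    · by_cases hxy : x = y
      · subst hxy; simp [pixleyDefault, (h x x).1]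
      · simp [pixleyDefault, Ne.symm hxy, hxy, (h x y).2.1]
  · intro h x y
    refine ⟨?_, ?_, ?_⟩ <;> rw [h] <;> simp [pixleyDefault]

theorem pixleyDefault_map {f : α → β} (hf : Injective f) (x y z : α) :
    f (pixleyDefault x y z) = pixleyDefault (f x) (f y) (f z) := by
  unfold pixleyDefault
  split_ifs <;> simp_all [hf.eq_iff]

theorem IsPixley.prod {q : β → β → β → β} (hp : IsPixley p) (hq : IsPixley q) :
    IsPixley fun x y z : α × β => (p x.1 y.1 z.1, q x.2 y.2 z.2) := fun _ _ =>
  ⟨Prod.ext (hp _ _).1 (hq _ _).1, Prod.ext (hp _ _).2.1 (hq _ _).2.1,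
    Prod.ext (hp _ _).2.2 (hq _ _).2.2⟩

end Pixley

section Amalgamation

variable {U : Type*} {A B : Set U} (pA : A → A → A → A) (pB : B → B → B → B)

open Classical in
noncomputable def amalgOp (x y z : ↥(A ∪ B)) : ↥(A ∪ B) :=
  if h : x.1 ∈ A ∧ y.1 ∈ A ∧ z.1 ∈ A then
    inclusion subset_union_left (pA ⟨x, h.1⟩ ⟨y, h.2.1⟩ ⟨z, h.2.2⟩)
  else if h : x.1 ∈ B ∧ y.1 ∈ B ∧ z.1 ∈ B then
    inclusion subset_union_right (pB ⟨x, h.1⟩ ⟨y, h.2.1⟩ ⟨z, h.2.2⟩)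
  else pixleyDefault x y z

variable {pA pB}

theorem isPixley_amalgOp (hA : IsPixley pA) (hB : IsPixley pB) :
    IsPixley (amalgOp pA pB) := by
  rw [isPixley_iff] at hA hB ⊢
  intro x y z hrep
  unfold amalgOp
  split_ifs with h h'
  · rw [hA _ _ _ (by simpa [Subtype.ext_iff] using hrep),
      pixleyDefault_map (inclusion_injective _)]
  · rw [hB _ _ _ (by simpa [Subtype.ext_iff] using hrep),
      pixleyDefault_map (inclusion_injective _)]
  · rfl

variable (pA pB) in
theorem amalgOp_inclusion_left (x y z : A) :
    amalgOp pA pB (inclusion subset_union_left x) (inclusion subset_union_left y)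
      (inclusion subset_union_left z) = inclusion subset_union_left (pA x y z) :=
  dif_pos ⟨x.2, y.2, z.2⟩

theorem amalgOp_inclusion_right
    (hAB : ∀ x y z : ↥(A ∩ B),
      (pA (inclusion inter_subset_left x) (inclusion inter_subset_left y)
        (inclusion inter_subset_left z) : U) =
      pB (inclusion inter_subset_right x) (inclusion inter_subset_right y)
        (inclusion inter_subset_right z))
    (x y z : B) :
    amalgOp pA pB (inclusion subset_union_right x) (inclusion subset_union_right y)
      (inclusion subset_union_right z) = inclusion subset_union_right (pB x y z) := by
  unfold amalgOp
  by_cases h : x.1 ∈ A ∧ y.1 ∈ A ∧ z.1 ∈ A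
  · rw [dif_pos h]
    exact Subtype.ext (hAB ⟨x, h.1, x.2⟩ ⟨y, h.2.1, y.2⟩ ⟨z, h.2.2, z.2⟩)
  · rw [dif_neg h, dif_pos ⟨x.2, y.2, z.2⟩]

end Amalgamation

/-- The class of algebras with a Pixley operation has the strong amalgamation
property and the joint embedding property. -/
theorem stmt_7 :
    (∀ (U : Type) (A B C : Set U), C.Nonempty →
      ∀ (pA : ↥A → ↥A → ↥A → ↥A) (pB : ↥B → ↥B → ↥B → ↥B) (pC : ↥C → ↥C → ↥C → ↥C),
      (∀ x y, pA x y y = x ∧ pA x y x = x ∧ pA y y x = x) →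
      (∀ x y, pB x y y = x ∧ pB x y x = x ∧ pB y y x = x) →
      (∀ x y, pC x y y = x ∧ pC x y x = x ∧ pC y y x = x) →
      ∀ (hCA : C ⊆ A) (hCB : C ⊆ B), A ∩ B = C →
      (∀ x y z : ↥C,
        ((pC x y z : U)) = (pA ⟨x, hCA x.2⟩ ⟨y, hCA y.2⟩ ⟨z, hCA z.2⟩ : U)) →
      (∀ x y z : ↥C,
        ((pC x y z : U)) = (pB ⟨x, hCB x.2⟩ ⟨y, hCB y.2⟩ ⟨z, hCB z.2⟩ : U)) →
      ∃ pD : ↥(A ∪ B) → ↥(A ∪ B) → ↥(A ∪ B) → ↥(A ∪ B),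
        (∀ x y, pD x y y = x ∧ pD x y x = x ∧ pD y y x = x) ∧
        (∀ x y z : ↥A, ((pA x y z : U)) =
          (pD ⟨x, Set.mem_union_left B x.2⟩ ⟨y, Set.mem_union_left B y.2⟩
            ⟨z, Set.mem_union_left B z.2⟩ : U)) ∧
        (∀ x y z : ↥B, ((pB x y z : U)) =
          (pD ⟨x, Set.mem_union_right A x.2⟩ ⟨y, Set.mem_union_right A y.2⟩
            ⟨z, Set.mem_union_right A z.2⟩ : U))) ∧
    (∀ (A B : Type), Nonempty A → Nonempty B →
      ∀ (pA : A → A → A → A) (pB : B → B → B → B),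
      (∀ x y, pA x y y = x ∧ pA x y x = x ∧ pA y y x = x) →
      (∀ x y, pB x y y = x ∧ pB x y x = x ∧ pB y y x = x) →
      ∃ (D : Type) (pD : D → D → D → D) (ι : A → D) (κ : B → D),
        (∀ x y, pD x y y = x ∧ pD x y x = x ∧ pD y y x = x) ∧
        Function.Injective ι ∧ Function.Injective κ ∧
        (∀ x y z, ι (pA x y z) = pD (ι x) (ι y) (ι z)) ∧
        (∀ x y z, κ (pB x y z) = pD (κ x) (κ y) (κ z))) := by
  refine ⟨?_, ?_⟩
  · rintro U A B C - pA pB pC hA hB - hCA hCB rfl hCpA hCpB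
    have hAB := fun x y z => (hCpA x y z).symm.trans (hCpB x y z)
    exact ⟨amalgOp pA pB, isPixley_amalgOp hA hB,
      fun x y z => congrArg Subtype.val (amalgOp_inclusion_left pA pB x y z).symm,
      fun x y z => congrArg Subtype.val (amalgOp_inclusion_right hAB x y z).symm⟩
  · rintro A B ⟨a₀⟩ ⟨b₀⟩ pA pB hA hB
    exact ⟨A × B, fun x y z => (pA x.1 y.1 z.1, pB x.2 y.2 z.2), fun a => (a, b₀),
      fun b => (a₀, b), IsPixley.prod hA hB,
      Prod.mk_left_injective b₀, Prod.mk_right_injective a₀,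
      fun _ _ _ => Prod.ext rfl (hB b₀ b₀).1.symm,
      fun _ _ _ => Prod.ext (hA a₀ a₀).1.symm rfl⟩
end

section
/- Let V be a variety with the strong amalgamation property (in the sense that amalgams exist for any configuration A, B, C with A ∩ B = C), and let V_h be the class of pairs (A, h) where A ∈ V and h : A → A is an endomorphism of A. Then V_h has the strong amalgamation property, provided V has pushouts in the category of V-algebras with homomorphisms whose amalgamating objects witness strong amalgamation. -/
theorem IsHom.comp {L : Lang} {M N P : Type*} {FM : OpsOn L M} {FN : OpsOn L N}
    {FP : OpsOn L P} {ψ : N → P} {φ : M → N} (hψ : IsHom FN FP ψ) (hφ : IsHom FM FN φ) :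
    IsHom FM FP (ψ ∘ φ) :=
  fun i t => by simp only [Function.comp_apply, hφ i t, hψ i]

theorem stmt_8_general (L : Lang) (V : ∀ M : Type, OpsOn L M → Prop)
    (hpush : ∀ (C A B : Type) (FC : OpsOn L C) (FA : OpsOn L A) (FB : OpsOn L B),
      V C FC → V A FA → V B FB →
      ∀ (e1 : C → A) (e2 : C → B),
        Function.Injective e1 → IsHom FC FA e1 →
        Function.Injective e2 → IsHom FC FB e2 →
        ∃ (D : Type) (FD : OpsOn L D) (jA : A → D) (jB : B → D),
          V D FD ∧
          Function.Injective jA ∧ IsHom FA FD jA ∧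
          Function.Injective jB ∧ IsHom FB FD jB ∧
          (∀ c, jA (e1 c) = jB (e2 c)) ∧
          (∀ a b, jA a = jB b → ∃ c, a = e1 c ∧ b = e2 c) ∧
          (∀ (E : Type) (FE : OpsOn L E), V E FE →
            ∀ (φA : A → E) (φB : B → E), IsHom FA FE φA → IsHom FB FE φB →
              (∀ c, φA (e1 c) = φB (e2 c)) →
              ∃ ψ : D → E, IsHom FD FE ψ ∧
                (∀ a, ψ (jA a) = φA a) ∧ (∀ b, ψ (jB b) = φB b)))
    (C A B : Type) (FC : OpsOn L C) (FA : OpsOn L A) (FB : OpsOn L B)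
    (hVC : V C FC) (hVA : V A FA) (hVB : V B FB)
    (hC : C → C) (hA : A → A) (hB : B → B)
    (hhA : IsHom FA FA hA) (hhB : IsHom FB FB hB)
    (e1 : C → A) (e2 : C → B)
    (he1 : Function.Injective e1) (hhom1 : IsHom FC FA e1)
    (he2 : Function.Injective e2) (hhom2 : IsHom FC FB e2)
    (hcomm1 : ∀ c, e1 (hC c) = hA (e1 c)) (hcomm2 : ∀ c, e2 (hC c) = hB (e2 c)) :
    ∃ (D : Type) (FD : OpsOn L D) (hD : D → D) (jA : A → D) (jB : B → D),
      V D FD ∧ IsHom FD FD hD ∧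
      Function.Injective jA ∧ IsHom FA FD jA ∧ (∀ a, jA (hA a) = hD (jA a)) ∧
      Function.Injective jB ∧ IsHom FB FD jB ∧ (∀ b, jB (hB b) = hD (jB b)) ∧
      (∀ c, jA (e1 c) = jB (e2 c)) ∧
      (∀ a b, jA a = jB b → ∃ c, a = e1 c ∧ b = e2 c) := by
  obtain ⟨D, FD, jA, jB, hVD, hjA, hjAhom, hjB, hjBhom, hsquare, hstrong, huniv⟩ :=
    hpush C A B FC FA FB hVC hVA hVB e1 e2 he1 hhom1 he2 hhom2
  -- `hD` is induced by the pushout property from `jA ∘ hA` and `jB ∘ hB`.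
  have hagree : ∀ c, (jA ∘ hA) (e1 c) = (jB ∘ hB) (e2 c) := fun c => by
    simp only [Function.comp_apply, ← hcomm1, ← hcomm2, hsquare]
  obtain ⟨hD, hDhom, hDA, hDB⟩ :=
    huniv D FD hVD (jA ∘ hA) (jB ∘ hB) (hjAhom.comp hhA) (hjBhom.comp hhB) hagree
  exact ⟨D, FD, hD, jA, jB, hVD, hDhom, hjA, hjAhom, fun a => (hDA a).symm,
    hjB, hjBhom, fun b => (hDB b).symm, hsquare, hstrong⟩

/-- If a variety `V` has pushouts of spans of embeddings that witness strong
amalgamation, then the class `V_h` of algebras of `V` equipped with an endomorphism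
`h` has the strong amalgamation property. -/
theorem stmt_8 (L : Lang) (V : ∀ M : Type, OpsOn L M → Prop)
    (hpush : ∀ (C A B : Type) (FC : OpsOn L C) (FA : OpsOn L A) (FB : OpsOn L B),
      V C FC → V A FA → V B FB →
      ∀ (e1 : C → A) (e2 : C → B),
        Function.Injective e1 → IsHom FC FA e1 →
        Function.Injective e2 → IsHom FC FB e2 →
        ∃ (D : Type) (FD : OpsOn L D) (jA : A → D) (jB : B → D),
          V D FD ∧
          Function.Injective jA ∧ IsHom FA FD jA ∧
          Function.Injective jB ∧ IsHom FB FD jB ∧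
          (∀ c, jA (e1 c) = jB (e2 c)) ∧
          (∀ a b, jA a = jB b → ∃ c, a = e1 c ∧ b = e2 c) ∧
          (∀ (E : Type) (FE : OpsOn L E), V E FE →
            ∀ (φA : A → E) (φB : B → E), IsHom FA FE φA → IsHom FB FE φB →
              (∀ c, φA (e1 c) = φB (e2 c)) →
              ∃ ψ : D → E, IsHom FD FE ψ ∧
                (∀ a, ψ (jA a) = φA a) ∧ (∀ b, ψ (jB b) = φB b)))
    (C A B : Type) (FC : OpsOn L C) (FA : OpsOn L A) (FB : OpsOn L B)
    (hVC : V C FC) (hVA : V A FA) (hVB : V B FB)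
    (hC : C → C) (hA : A → A) (hB : B → B)
    (hhC : IsHom FC FC hC) (hhA : IsHom FA FA hA) (hhB : IsHom FB FB hB)
    (e1 : C → A) (e2 : C → B)
    (he1 : Function.Injective e1) (hhom1 : IsHom FC FA e1)
    (he2 : Function.Injective e2) (hhom2 : IsHom FC FB e2)
    (hcomm1 : ∀ c, e1 (hC c) = hA (e1 c)) (hcomm2 : ∀ c, e2 (hC c) = hB (e2 c)) :
    ∃ (D : Type) (FD : OpsOn L D) (hD : D → D) (jA : A → D) (jB : B → D),
      V D FD ∧ IsHom FD FD hD ∧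
      Function.Injective jA ∧ IsHom FA FD jA ∧ (∀ a, jA (hA a) = hD (jA a)) ∧
      Function.Injective jB ∧ IsHom FB FD jB ∧ (∀ b, jB (hB b) = hD (jB b)) ∧
      (∀ c, jA (e1 c) = jB (e2 c)) ∧
      (∀ a b, jA a = jB b → ∃ c, a = e1 c ∧ b = e2 c) :=
  stmt_8_general L V hpush C A B FC FA FB hVC hVA hVB hC hA hB hhA hhB e1 e2 he1 hhom1 he2 hhom2
    hcomm1 hcomm2
end

section
/- The class of distributive lattices equipped with a unary operation h satisfying h(x + y) = h(x) + h(y) (h preserves joins but not necessarily meets) does not have the amalgamation property. Concretely: let C be the 3-element chain 0 < 1 < 2 with h the identity; let A = {0,1,2,a} where a is a complement of 1 (a + 1 = 2, a·1 = 0) with h the identity; let B = {0,1,2,b} where b is a complement of 1, with h the identity on {0,1,2} and h(b) = 2. Then A, B, C all satisfy h(x+y) = h(x)+h(y), C is a subalgebra of both A and B, but there is no structure in the class admitting embeddings of A and B agreeing on C. -/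
/-- The common subalgebra: the 3-element chain `0 < 1 < 2` inside the four-element
distributive lattice `Bool × Bool`, with `0 = (false, false)`, `1 = (true, false)`,
`2 = (true, true)`; the extra elements `a = b = (false, true)` are complements of `1`. -/
def chainC : Set (Bool × Bool) := {(false, false), (true, false), (true, true)}

/-- The unary operation of `B`: the identity on the chain, sending the complement
`b = (false, true)` of `1` to the top `2 = (true, true)`. -/
def opB : Bool × Bool → Bool × Bool :=
  fun x => if x = (false, true) then (true, true) else x

/-! Any two amalgamating embeddings must identify `a` and `b`, since relative complements
are unique in a distributive lattice; but `h` fixes `a` and sends `b` to `2 ≠ a`. -/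

theorem map_eq_map_of_inf_eq_of_sup_eq {α D : Type*} [Lattice α] [DistribLattice D]
    {ι κ : α → D} (hι_sup : ∀ x y, ι (x ⊔ y) = ι x ⊔ ι y) (hι_inf : ∀ x y, ι (x ⊓ y) = ι x ⊓ ι y)
    (hκ_sup : ∀ x y, κ (x ⊔ y) = κ x ⊔ κ y) (hκ_inf : ∀ x y, κ (x ⊓ y) = κ x ⊓ κ y)
    {x y u : α} (hinf : x ⊓ u = y ⊓ u) (hsup : x ⊔ u = y ⊔ u) (hu : ι u = κ u)
    (hinf_map : ι (x ⊓ u) = κ (x ⊓ u)) (hsup_map : ι (x ⊔ u) = κ (x ⊔ u)) : ι x = κ y := by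
  refine eq_of_inf_eq_sup_eq (a := ι u) ?_ ?_
  · rw [← hι_inf, hinf_map, hinf, hκ_inf, hu]
  · rw [← hι_sup, hsup_map, hsup, hκ_sup, hu]

/-- The class of distributive lattices with a unary join-preserving operation `h`
does not have the amalgamation property: the algebra `A` (the lattice `Bool × Bool`
with `h = id`) and the algebra `B` (the same lattice with `h = opB`) both satisfy
`h(x ⊔ y) = h x ⊔ h y` and share the subalgebra `C` (the chain, with `h = id`),
but they admit no pair of embeddings into a common algebra of the class agreeing
on `C`. -/
theorem stmt_9 :
    (∀ x y : Bool × Bool, id (x ⊔ y) = id x ⊔ id y) ∧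
    (∀ x y : Bool × Bool, opB (x ⊔ y) = opB x ⊔ opB y) ∧
    (∀ x ∈ chainC, opB x = x) ∧
    ∀ (D : Type) [instD : DistribLattice D] (hD : D → D) (ι κ : Bool × Bool → D),
      (∀ x y : D, hD (x ⊔ y) = hD x ⊔ hD y) →
      Function.Injective ι → Function.Injective κ →
      (∀ x y, ι (x ⊔ y) = ι x ⊔ ι y) → (∀ x y, ι (x ⊓ y) = ι x ⊓ ι y) →
      (∀ x y, κ (x ⊔ y) = κ x ⊔ κ y) → (∀ x y, κ (x ⊓ y) = κ x ⊓ κ y) →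
      (∀ x, hD (ι x) = ι (id x)) → (∀ x, hD (κ x) = κ (opB x)) →
      ¬ (∀ c ∈ chainC, ι c = κ c) := by
  refine ⟨fun _ _ => rfl, by decide, ?_, ?_⟩
  · rintro x (rfl | rfl | rfl) <;> rfl
  · intro D _ hD ι κ _ hι_inj _ hι_sup hι_inf hκ_sup hκ_inf hι hκ hagree
    have hab : ι (false, true) = κ (false, true) :=
      map_eq_map_of_inf_eq_of_sup_eq hι_sup hι_inf hκ_sup hκ_inf (u := (true, false)) rfl rfl
        (hagree _ (by simp [chainC])) (hagree _ (by simp [chainC])) (hagree _ (by simp [chainC]))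
    have ha_eq_top : ι (false, true) = ι (true, true) :=
      calc ι (false, true) = hD (ι (false, true)) := (hι _).symm
        _ = hD (κ (false, true)) := by rw [hab]
        _ = κ (true, true) := hκ _
        _ = ι (true, true) := (hagree _ (by simp [chainC])).symm
    exact absurd (hι_inj ha_eq_top) (by decide)
end

section
/- The quasivariety Q of algebras with two unary operations f, g axiomatized by the quasiequation (f(x) = f(y)) → x = y (i.e. f is injective) does not have the amalgamation property. Concretely: let C = ℕ⁺ = {1,2,3,…} with f and g both the successor function; let A = ℕ⁺ ∪ {0} with f and g the successor (f(0) = g(0) = 1); let B = ℕ⁺ ∪ {0'} with f the successor (f(0') = 1) and g(0') = 0'. Then f is injective in A, B, C, C is a subalgebra of both A and B with A ∩ B = C, but there is no algebra with injective f admitting embeddings of A and B agreeing on C. -/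
/-- The quasivariety of algebras with two unary operations `f`, `g` axiomatized by
`f x = f y → x = y` does not have the amalgamation property.  Concretely, take
`C = ℕ⁺` with `f = g = succ`; `A = ℕ` with `f = g = succ`; `B = ℕ` (a disjoint copy
of `0`) with `f = succ` and `g 0 = 0`, `g (n+1) = n+2`.  Then `f` is injective in all
three algebras, but there is no algebra with injective `f` admitting embeddings of
`A` and `B` agreeing on `C = {n | 0 < n}`. -/
theorem stmt_11 :
    Function.Injective Nat.succ ∧
    ¬ ∃ (D : Type) (fD gD : D → D) (ι κ : ℕ → D),
        Function.Injective fD ∧ Function.Injective ι ∧ Function.Injective κ ∧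
        (∀ n, ι (n + 1) = fD (ι n)) ∧ (∀ n, ι (n + 1) = gD (ι n)) ∧
        (∀ n, κ (n + 1) = fD (κ n)) ∧
        (∀ n, κ (if n = 0 then 0 else n + 1) = gD (κ n)) ∧
        (∀ n, 0 < n → ι n = κ n) := by
  refine ⟨Nat.succ_injective, ?_⟩
  rintro ⟨D, fD, gD, ι, κ, hf, hι, -, hιf, hιg, hκf, hκg, hagree⟩
  -- `ι 0` and `κ 0` are `fD`-preimages of the common image of `1`.
  have hzero : ι 0 = κ 0 := hf <| by rw [← hιf, ← hκf]; exact hagree 1 one_pos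
  have hfixed : gD (κ 0) = κ 0 := by simpa using (hκg 0).symm
  have hcollapse : ι 1 = ι 0 := by rw [hιg, hzero, hfixed, ← hzero]
  exact one_ne_zero (hι hcollapse)
end

section
/- Let T be a theory in a relational-functional language L with the strong amalgamation property, such that every model of T extends to a model D containing an element d̄ with R(d̄, d̄, …, d̄) holding for every relation symbol R of L. Let T' ⊇ T in a language L' ⊇ L where L' \ L consists only of function symbols, and suppose T' \ T consists of axioms of the form R(f₁(x̄₁), f₂(x̄₂), …, f_m(x̄_m)) where R ∈ L, f₁, …, f_m ∈ L' \ L, and the sets of variables occurring in x̄₁, …, x̄_m are all equal. Then T' has the strong amalgamation property. -/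
/-- A language with relation symbols and function symbols. -/
structure RLang where
  rels : Type
  rarity : rels → ℕ
  funcs : Type
  farity : funcs → ℕ

/-- A structure for `L` on a subset of the ambient type `U`. -/
structure RStruct (L : RLang) (U : Type) where
  carrier : Set U
  rel : ∀ r : L.rels, (Fin (L.rarity r) → ↥carrier) → Prop
  func : ∀ f : L.funcs, (Fin (L.farity f) → ↥carrier) → ↥carrier

/-- `A` is a substructure of `D`. -/
def RSub {L : RLang} {U : Type} (A D : RStruct L U) : Prop :=
  ∃ h : A.carrier ⊆ D.carrier,
    (∀ f t, ((A.func f t : U)) = (D.func f (fun k => ⟨t k, h (t k).2⟩) : U)) ∧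
    (∀ r t, A.rel r t ↔ D.rel r (fun k => ⟨t k, h (t k).2⟩))

/-- An axiom of the new kind: `R(f₁(x̄₁), …, f_m(x̄_m))` where `R` is a relation of the
base language and the `f_j` are new function symbols, applied to variables. -/
structure NewAx (L : RLang) (ν : Type) (na : ν → ℕ) where
  r : L.rels
  fs : Fin (L.rarity r) → ν
  vs : ∀ j, Fin (na (fs j)) → ℕ

/-- Satisfaction of a new axiom in a structure expanded by interpretations `NF` of the
new function symbols. -/
def SatAx {L : RLang} {ν : Type} {na : ν → ℕ} {U : Type} (S : RStruct L U)
    (NF : ∀ n : ν, (Fin (na n) → ↥S.carrier) → ↥S.carrier) (ax : NewAx L ν na) : Prop :=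
  ∀ σ : ℕ → ↥S.carrier, S.rel ax.r (fun j => NF (ax.fs j) (fun k => σ (ax.vs j k)))

/-- An expanded structure: an `L`-structure together with interpretations of the new
function symbols. -/
structure ERStruct (L : RLang) (ν : Type) (na : ν → ℕ) (U : Type) where
  toR : RStruct L U
  nf : ∀ n : ν, (Fin (na n) → ↥toR.carrier) → ↥toR.carrier

/-- Substructure for expanded structures. -/
def ESub {L : RLang} {ν : Type} {na : ν → ℕ} {U : Type} (A D : ERStruct L ν na U) : Prop :=
  ∃ h : A.toR.carrier ⊆ D.toR.carrier,
    (∀ f t, ((A.toR.func f t : U)) = (D.toR.func f (fun k => ⟨t k, h (t k).2⟩) : U)) ∧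
    (∀ r t, A.toR.rel r t ↔ D.toR.rel r (fun k => ⟨t k, h (t k).2⟩)) ∧
    (∀ n t, ((A.nf n t : U)) = (D.nf n (fun k => ⟨t k, h (t k).2⟩) : U))

/-!
Amalgamate the `L`-reducts by strong amalgamation for `T`, and extend the amalgam `D` to a model
with a point `d` satisfying every relation at `(d, …, d)`. Interpret each new function symbol by
its `A`-interpretation on tuples from `A`, by its `B`-interpretation on the other tuples from `B`
(the two agree on tuples from `A ∩ B = C`), and by `d` elsewhere. An instance of a new axiom whose
variables all take values in `A` (or all in `B`) holds in `D` because it holds in `A` (or `B`).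
Otherwise some variable takes a value outside `A` and some variable a value outside `B`; since all
argument tuples of the axiom use the same variables, every argument tuple then lies neither
inside `A` nor inside `B`, so every new function symbol returns `d`.
-/

section Amalgamation

variable {L : RLang} {ν : Type} {na : ν → ℕ} {U : Type}

theorem RSub.trans {A B D : RStruct L U} (hAB : RSub A B) (hBD : RSub B D) : RSub A D := by
  obtain ⟨hAB, hfAB, hrAB⟩ := hAB
  obtain ⟨hBD, hfBD, hrBD⟩ := hBD
  exact ⟨hAB.trans hBD, fun f t => (hfAB f t).trans (hfBD f _),
    fun r t => (hrAB r t).trans (hrBD r _)⟩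

theorem ESub.toRSub {A D : ERStruct L ν na U} (h : ESub A D) : RSub A.toR D.toR :=
  let ⟨hsub, hf, hr, _⟩ := h
  ⟨hsub, hf, hr⟩

theorem ESub.of_rSub {A D : ERStruct L ν na U} (hAD : RSub A.toR D.toR)
    (hnf : ∀ n (t : Fin (na n) → D.toR.carrier) (ht : ∀ k, (t k : U) ∈ A.toR.carrier),
      (A.nf n (fun k => ⟨t k, ht k⟩) : U) = D.nf n t) :
    ESub A D :=
  let ⟨hsub, hf, hr⟩ := hAD
  ⟨hsub, hf, hr, fun n t => hnf n (fun k => ⟨t k, hsub (t k).2⟩) fun k => (t k).2⟩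

theorem ESub.nf_eq_of_inter_eq {A B C : ERStruct L ν na U} (hCA : ESub C A) (hCB : ESub C B)
    (hABC : A.toR.carrier ∩ B.toR.carrier = C.toR.carrier) (n : ν) (t : Fin (na n) → U)
    (hA : ∀ k, t k ∈ A.toR.carrier) (hB : ∀ k, t k ∈ B.toR.carrier) :
    (A.nf n (fun k => ⟨t k, hA k⟩) : U) = B.nf n (fun k => ⟨t k, hB k⟩) := by
  obtain ⟨_, -, -, hnfA⟩ := hCA
  obtain ⟨_, -, -, hnfB⟩ := hCB
  have hC : ∀ k, t k ∈ C.toR.carrier := fun k => hABC ▸ ⟨hA k, hB k⟩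
  exact (hnfA n fun k => ⟨t k, hC k⟩).symm.trans (hnfB n fun k => ⟨t k, hC k⟩)

theorem ESub.rel_of_satAx {S D : ERStruct L ν na U} (hSD : ESub S D)
    (hne : S.toR.carrier.Nonempty) {ax : NewAx L ν na} (hax : SatAx S.toR S.nf ax)
    (σ : ℕ → D.toR.carrier) (hσ : ∀ j k, (σ (ax.vs j k) : U) ∈ S.toR.carrier) :
    D.toR.rel ax.r (fun j => D.nf (ax.fs j) fun k => σ (ax.vs j k)) := by
  classical
  obtain ⟨_, -, hr, hnf⟩ := hSD
  obtain ⟨s, hs⟩ := hne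
  let σS : ℕ → S.toR.carrier := fun m =>
    if hm : (σ m : U) ∈ S.toR.carrier then ⟨σ m, hm⟩ else ⟨s, hs⟩
  convert (hr ax.r _).1 (hax σS) using 2 with j
  refine Subtype.ext ((hnf _ _).trans ?_).symm
  congr 2 with k
  simp [σS, hσ j k]

theorem not_forall_of_range_eq {ι α : Type} {κ : ι → Type} (v : ∀ j, κ j → α)
    (hv : ∀ j j', Set.range (v j) = Set.range (v j')) {P : α → Prop} (h : ¬ ∀ j k, P (v j k))
    (j : ι) : ¬ ∀ k, P (v j k) := by
  push Not at h
  obtain ⟨j₀, k₀, hk₀⟩ := h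
  obtain ⟨k, hk⟩ : v j₀ k₀ ∈ Set.range (v j) := hv j j₀ ▸ Set.mem_range_self k₀
  exact fun hP => hk₀ (hk ▸ hP k)

noncomputable def glueExpansion (A B : ERStruct L ν na U) (D : RStruct L U)
    (hAD : RSub A.toR D) (hBD : RSub B.toR D) (d : D.carrier) : ERStruct L ν na U where
  toR := D
  nf n t := by
    classical
    exact if hAt : ∀ k, (t k : U) ∈ A.toR.carrier then
        Set.inclusion hAD.fst (A.nf n fun k => ⟨t k, hAt k⟩)
      else if hBt : ∀ k, (t k : U) ∈ B.toR.carrier then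
        Set.inclusion hBD.fst (B.nf n fun k => ⟨t k, hBt k⟩)
      else d

variable {A B : ERStruct L ν na U} {D : RStruct L U} {hAD : RSub A.toR D} {hBD : RSub B.toR D}
  {d : D.carrier}

theorem glueExpansion_nf_of_forall_mem_left {n : ν} {t : Fin (na n) → D.carrier}
    (hAt : ∀ k, (t k : U) ∈ A.toR.carrier) :
    (glueExpansion A B D hAD hBD d).nf n t =
      Set.inclusion hAD.fst (A.nf n fun k => ⟨t k, hAt k⟩) :=
  dif_pos hAt

theorem glueExpansion_nf_of_forall_mem_right {n : ν} {t : Fin (na n) → D.carrier}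
    (hAt : ¬ ∀ k, (t k : U) ∈ A.toR.carrier) (hBt : ∀ k, (t k : U) ∈ B.toR.carrier) :
    (glueExpansion A B D hAD hBD d).nf n t =
      Set.inclusion hBD.fst (B.nf n fun k => ⟨t k, hBt k⟩) :=
  (dif_neg hAt).trans (dif_pos hBt)

theorem glueExpansion_nf_of_not_forall_mem {n : ν} {t : Fin (na n) → D.carrier}
    (hAt : ¬ ∀ k, (t k : U) ∈ A.toR.carrier) (hBt : ¬ ∀ k, (t k : U) ∈ B.toR.carrier) :
    (glueExpansion A B D hAD hBD d).nf n t = d :=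
  (dif_neg hAt).trans (dif_neg hBt)

theorem eSub_glueExpansion_left : ESub A (glueExpansion A B D hAD hBD d) := by
  refine ESub.of_rSub (D := glueExpansion A B D hAD hBD d) hAD fun n t ht => ?_
  rw [glueExpansion_nf_of_forall_mem_left (D := D) ht]

theorem eSub_glueExpansion_right
    (hAB : ∀ n (t : Fin (na n) → U) (hAt : ∀ k, t k ∈ A.toR.carrier)
      (hBt : ∀ k, t k ∈ B.toR.carrier),
      (A.nf n (fun k => ⟨t k, hAt k⟩) : U) = B.nf n (fun k => ⟨t k, hBt k⟩)) :
    ESub B (glueExpansion A B D hAD hBD d) := by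
  refine ESub.of_rSub (D := glueExpansion A B D hAD hBD d) hBD fun n t hBt => ?_
  by_cases hAt : ∀ k, (t k : U) ∈ A.toR.carrier
  · rw [glueExpansion_nf_of_forall_mem_left (D := D) hAt]
    exact (hAB n _ hAt hBt).symm
  · rw [glueExpansion_nf_of_forall_mem_right (D := D) hAt hBt]

theorem glueExpansion_satAx {ax : NewAx L ν na}
    (hvars : ∀ j j', Set.range (ax.vs j) = Set.range (ax.vs j'))
    (hAE : ESub A (glueExpansion A B D hAD hBD d)) (hBE : ESub B (glueExpansion A B D hAD hBD d))
    (hAne : A.toR.carrier.Nonempty) (hBne : B.toR.carrier.Nonempty)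
    (hAax : SatAx A.toR A.nf ax) (hBax : SatAx B.toR B.nf ax) (hd : ∀ r, D.rel r fun _ => d) :
    SatAx D (glueExpansion A B D hAD hBD d).nf ax := by
  intro σ
  by_cases hσA : ∀ j k, (σ (ax.vs j k) : U) ∈ A.toR.carrier
  · exact hAE.rel_of_satAx hAne hAax σ hσA
  by_cases hσB : ∀ j k, (σ (ax.vs j k) : U) ∈ B.toR.carrier
  · exact hBE.rel_of_satAx hBne hBax σ hσB
  have hconst : (fun j => (glueExpansion A B D hAD hBD d).nf (ax.fs j) fun k => σ (ax.vs j k)) =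
      fun _ => d :=
    funext fun j => glueExpansion_nf_of_not_forall_mem
      (not_forall_of_range_eq _ hvars (P := fun m => (σ m : U) ∈ A.toR.carrier) hσA j)
      (not_forall_of_range_eq _ hvars (P := fun m => (σ m : U) ∈ B.toR.carrier) hσB j)
  exact hconst ▸ hd ax.r

end Amalgamation

/-- Suppose `T` has the strong amalgamation property and every model of `T` extends to
a model containing an element `d̄` with `R(d̄, …, d̄)` for every relation symbol `R`.
Let `T'` extend `T` by new function symbols and axioms `R(f₁(x̄₁), …, f_m(x̄_m))` in
which all the tuples `x̄_j` use the same set of variables.  Then `T'` has the strong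
amalgamation property. -/
theorem stmt_15 (L : RLang) (ν : Type) (na : ν → ℕ)
    (T : ∀ U : Type, RStruct L U → Prop)
    (Axs : Set (NewAx L ν na))
    (hvars : ∀ ax ∈ Axs, ∀ j j', Set.range (ax.vs j) = Set.range (ax.vs j'))
    (hSAP : ∀ (U : Type) (A B C : RStruct L U), T U A → T U B → T U C →
      C.carrier.Nonempty → RSub C A → RSub C B →
      A.carrier ∩ B.carrier = C.carrier →
      ∃ D : RStruct L U, T U D ∧ RSub A D ∧ RSub B D)
    (hext : ∀ (U : Type) (D₁ : RStruct L U), T U D₁ →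
      ∃ D : RStruct L U, T U D ∧ RSub D₁ D ∧
        ∃ d : ↥D.carrier, ∀ r, D.rel r (fun _ => d)) :
    ∀ (U : Type) (A B C : ERStruct L ν na U),
      T U A.toR → T U B.toR → T U C.toR →
      (∀ ax ∈ Axs, SatAx A.toR A.nf ax) → (∀ ax ∈ Axs, SatAx B.toR B.nf ax) →
      (∀ ax ∈ Axs, SatAx C.toR C.nf ax) →
      C.toR.carrier.Nonempty → ESub C A → ESub C B →
      A.toR.carrier ∩ B.toR.carrier = C.toR.carrier →
      ∃ D : ERStruct L ν na U,
        T U D.toR ∧ (∀ ax ∈ Axs, SatAx D.toR D.nf ax) ∧ ESub A D ∧ ESub B D := by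
  intro U A B C hTA hTB hTC hAxA hAxB _ hCne hCA hCB hABC
  obtain ⟨D₀, hTD₀, hAD₀, hBD₀⟩ :=
    hSAP U A.toR B.toR C.toR hTA hTB hTC hCne hCA.toRSub hCB.toRSub hABC
  obtain ⟨D, hTD, hD₀D, d, hd⟩ := hext U D₀ hTD₀
  have hAD := hAD₀.trans hD₀D
  have hBD := hBD₀.trans hD₀D
  have hAE := eSub_glueExpansion_left (hAD := hAD) (hBD := hBD) (d := d)
  have hBE := eSub_glueExpansion_right (hAD := hAD) (hBD := hBD) (d := d)
    (hCA.nf_eq_of_inter_eq hCB hABC)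
  refine ⟨_, hTD, fun ax hax => ?_, hAE, hBE⟩
  exact glueExpansion_satAx (hvars ax hax) hAE hBE (hCne.mono hCA.fst) (hCne.mono hCB.fst)
    (hAxA ax hax) (hAxB ax hax) hd
end
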